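/- Let q be an element of a commutative ring and write D^{inv}_{n,k}(q) = Σ_{(σ,S)∈𝔖^>_{n,k}} q^{inv((σ,S))}, with the convention D^{inv}_{n,−1}(q) = 0. Then D^{inv}_{n,n−1}(q) = 1 for all n ≥ 1, and for all n ≥ 2 and 0 ≤ k ≤ n−2, D^{inv}_{n,k}(q) = [n−k]_q · D^{inv}_{n−1,k}(q) + [n−k]_q · D^{inv}_{n−1,k−1}(q). -/

import Mathlib

/-!
Every `σ ∈ 𝔖_{n+1}` arises from a unique `π ∈ 𝔖_n` by inserting the letter `n + 1` at a position
`p + 1`, `0 ≤ p ≤ n`. This destroys the descent of `π` at `p`, shifts the descents to the right of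
`p` by one, and creates the descent `p + 1` exactly when `p < n`. Hence a star set `S` of `σ` with
`|S| = k` is either the shift of a star set `S'` of `π` with `p ∉ S'` and `|S'| = k`, or the shift
of such an `S'` with `|S'| = k - 1` together with `p + 1` (when `p < n`). In both cases
`inv (σ, S) - inv (π, S')` is the number of free slots to the right of `p`, where the free slots
are `{0, …, n} \ S'` in the first case and `{0, …, n - 1} \ S'` in the second, and `p` ranges over
the free slots. So for fixed `(π, S')` the sum of `q ^ inv (σ, S)` is `q ^ inv (π, S')` times the
`q`-integer of the number of free slots, which is `n + 1 - k` in both cases.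
-/

open Finset

/-- One-line notation: `oneline σ i` is the value σ_i ∈ {1,…,n} at position i ∈ {1,…,n}. -/
def oneline {n : ℕ} (σ : Equiv.Perm (Fin n)) (i : ℕ) : ℕ :=
  if h : 1 ≤ i ∧ i ≤ n then (σ ⟨i - 1, by omega⟩ : ℕ) + 1 else 0

/-- The descent set Des(σ) = {i ∈ {1,…,n−1} : σ_i > σ_{i+1}}. -/
def DesSet {n : ℕ} (σ : Equiv.Perm (Fin n)) : Finset ℕ :=
  (Finset.Icc 1 (n - 1)).filter fun i => oneline σ (i + 1) < oneline σ i

/-- The ascent set Asc(σ) = {i ∈ {1,…,n−1} : σ_i < σ_{i+1}}. -/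
def AscSet {n : ℕ} (σ : Equiv.Perm (Fin n)) : Finset ℕ :=
  (Finset.Icc 1 (n - 1)).filter fun i => oneline σ i < oneline σ (i + 1)

/-- maj(σ) = Σ_{i ∈ Des(σ)} i. -/
def majNum {n : ℕ} (σ : Equiv.Perm (Fin n)) : ℕ := ∑ i ∈ DesSet σ, i

/-- des(σ) = |Des(σ)|. -/
def desNum {n : ℕ} (σ : Equiv.Perm (Fin n)) : ℕ := (DesSet σ).card

/-- inv(σ) = #{(i,j) : 1 ≤ i < j ≤ n, σ_i > σ_j}. -/
def invNum {n : ℕ} (σ : Equiv.Perm (Fin n)) : ℕ :=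
  ((Finset.Icc 1 n ×ˢ Finset.Icc 1 n).filter fun p =>
    p.1 < p.2 ∧ oneline σ p.2 < oneline σ p.1).card

/-- coinv(σ) = #{(i,j) : 1 ≤ i < j ≤ n, σ_i < σ_j}. -/
def coinvNum {n : ℕ} (σ : Equiv.Perm (Fin n)) : ℕ :=
  ((Finset.Icc 1 n ×ˢ Finset.Icc 1 n).filter fun p =>
    p.1 < p.2 ∧ oneline σ p.1 < oneline σ p.2).card

/-- inv^{□,j}(σ) = #{i : 1 ≤ i < j, σ_i > σ_j}, inversions ending at position j. -/
def invEnd {n : ℕ} (σ : Equiv.Perm (Fin n)) (j : ℕ) : ℕ :=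
  ((Finset.Icc 1 n).filter fun i => i < j ∧ oneline σ j < oneline σ i).card

/-- inv^{i,□}(σ) = #{j : i < j ≤ n, σ_i > σ_j}, inversions starting at position i. -/
def invStart {n : ℕ} (σ : Equiv.Perm (Fin n)) (i : ℕ) : ℕ :=
  ((Finset.Icc 1 n).filter fun j => i < j ∧ oneline σ j < oneline σ i).card

/-- [m]_q = 1 + q + ⋯ + q^{m−1}. -/
def qnum {R : Type*} [CommRing R] (q : R) (m : ℕ) : R := ∑ i ∈ Finset.range m, q ^ i

/-- [m]_q! = [1]_q [2]_q ⋯ [m]_q, with [0]_q! = 1. -/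
def qfact {R : Type*} [CommRing R] (q : R) (m : ℕ) : R := ∏ i ∈ Finset.range m, qnum q (i + 1)

/-- q-Stirling numbers: S_{0,0}(q)=1, S_{n,k}(q)=0 for k<0 or k>n, and
S_{n+1,k}(q) = S_{n,k−1}(q) + [k]_q S_{n,k}(q). -/
def qStirling {R : Type*} [CommRing R] (q : R) : ℕ → ℕ → R
  | 0, 0 => 1
  | 0, _ + 1 => 0
  | _ + 1, 0 => 0
  | n + 1, k + 1 => qStirling q n k + qnum q (k + 1) * qStirling q n (k + 1)

/-- The set of star-sets of size k inside a given finite set (e.g. the descent set). -/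
def starSets (D : Finset ℕ) (k : ℕ) : Finset (Finset ℕ) :=
  D.powerset.filter fun S => S.card = k

/-- inv((σ,S)) = inv(σ) − Σ_{i∈S} (1 + inv^{□,i}(σ)) for a descent-starred permutation. -/
def starInv {n : ℕ} (σ : Equiv.Perm (Fin n)) (S : Finset ℕ) : ℕ :=
  invNum σ - ∑ i ∈ S, (1 + invEnd σ i)

/-- maj((σ,S)) = maj(σ) − Σ_{i∈S} |Des(σ) ∩ {i,…,n−1}| for a descent-starred permutation. -/
def starMaj {n : ℕ} (σ : Equiv.Perm (Fin n)) (S : Finset ℕ) : ℕ :=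
  majNum σ - ∑ i ∈ S, (DesSet σ ∩ Finset.Icc i (n - 1)).card

/-- Gaussian binomial coefficients: binom_q(m,0)=1, binom_q(m,r)=0 for r>m, and
binom_q(m,r) = binom_q(m−1,r−1) + q^r · binom_q(m−1,r). -/
def qbinom {R : Type*} [CommRing R] (q : R) : ℕ → ℕ → R
  | _, 0 => 1
  | 0, _ + 1 => 0
  | m + 1, r + 1 => qbinom q m r + q ^ (r + 1) * qbinom q m (r + 1)

/-- A_{n,j}(q) = Σ_{σ ∈ 𝔖_n, des(σ)=j} q^{maj(σ)}. -/
def eulerA {R : Type*} [CommRing R] (q : R) (n j : ℕ) : R :=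
  ∑ σ ∈ (Finset.univ : Finset (Equiv.Perm (Fin n))).filter (fun σ => desNum σ = j),
    q ^ majNum σ

/-- [m]_{p,q} = p^{m−1} + p^{m−2} q + ⋯ + p q^{m−2} + q^{m−1}. -/
def pqnum {R : Type*} [CommRing R] (p q : R) (m : ℕ) : R :=
  ∑ i ∈ Finset.range m, p ^ (m - 1 - i) * q ^ i

/-- [m]_{p,q}! = [1]_{p,q} [2]_{p,q} ⋯ [m]_{p,q}. -/
def pqfact {R : Type*} [CommRing R] (p q : R) (m : ℕ) : R :=
  ∏ i ∈ Finset.range m, pqnum p q (i + 1)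

/-- p,q-Stirling numbers: S_{0,0}(p,q)=1, S_{n,k}(p,q)=0 for k<0 or k>n, and
S_{n+1,k}(p,q) = S_{n,k−1}(p,q) + [k]_{p,q} S_{n,k}(p,q). -/
def pqStirling {R : Type*} [CommRing R] (p q : R) : ℕ → ℕ → R
  | 0, 0 => 1
  | 0, _ + 1 => 0
  | _ + 1, 0 => 0
  | n + 1, k + 1 => pqStirling p q n k + pqnum p q (k + 1) * pqStirling p q n (k + 1)

/-- D^{inv}_{n,k}(q) = Σ_{(σ,S)∈𝔖^>_{n,k}} q^{inv((σ,S))}. -/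
def Dinv {R : Type*} [CommRing R] (q : R) (n k : ℕ) : R :=
  ∑ σ : Equiv.Perm (Fin n), ∑ S ∈ starSets (DesSet σ) k, q ^ starInv σ S

/-- After inserting a letter at position `P`, the letter formerly at position `i` sits at
position `skip P i`. -/
def skip (P : ℕ) : ℕ ↪o ℕ :=
  OrderEmbedding.ofStrictMono (fun i => if i < P then i else i + 1) fun a b h => by
    dsimp only
    split_ifs <;> omega

lemma skip_apply (P i : ℕ) : skip P i = if i < P then i else i + 1 := rfl

lemma skip_ne (P i : ℕ) : skip P i ≠ P := by
  rw [skip_apply]; split_ifs <;> omega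

lemma exists_skip_eq {P j : ℕ} (h : j ≠ P) : ∃ i, skip P i = j := by
  rcases lt_or_gt_of_ne h with h | h
  · exact ⟨j, by rw [skip_apply, if_pos h]⟩
  · exact ⟨j - 1, by rw [skip_apply, if_neg (by omega)]; omega⟩

lemma Icc_eq_insert_map_skip {n P : ℕ} (h1 : 1 ≤ P) (h2 : P ≤ n + 1) :
    Icc 1 (n + 1) = insert P ((Icc 1 n).map (skip P).toEmbedding) := by
  ext j
  simp only [mem_Icc, mem_insert, mem_map, RelEmbedding.coe_toEmbedding]
  constructor
  · intro hj
    by_cases hjP : j = P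
    · exact Or.inl hjP
    obtain ⟨i, rfl⟩ := exists_skip_eq hjP
    refine Or.inr ⟨i, ?_, rfl⟩
    rw [skip_apply] at hj
    split_ifs at hj <;> omega
  · rintro (rfl | ⟨i, hi, rfl⟩)
    · omega
    · rw [skip_apply]; split_ifs <;> omega

section Permutations

variable {m : ℕ} (σ : Equiv.Perm (Fin m))

lemma oneline_val_add_one (j : Fin m) :
    oneline σ (j + 1) = σ j + 1 := by
  simp [oneline]

lemma oneline_pos_iff (i : ℕ) :
    0 < oneline σ i ↔ 1 ≤ i ∧ i ≤ m := by
  unfold oneline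
  split_ifs with h <;> simp [h]

lemma oneline_le (i : ℕ) : oneline σ i ≤ m := by
  unfold oneline
  split_ifs with h
  · have := (σ ⟨i - 1, by omega⟩).isLt
    omega
  · omega

lemma mem_DesSet_iff (i : ℕ) :
    i ∈ DesSet σ ↔ 1 ≤ i ∧ 0 < oneline σ (i + 1) ∧ oneline σ (i + 1) < oneline σ i := by
  rw [DesSet, mem_filter, mem_Icc, oneline_pos_iff]
  omega

lemma DesSet_subset_range {N : ℕ} (hN : m ≤ N) : DesSet σ ⊆ range N := fun i hi => by
  have := mem_Icc.mp (filter_subset _ _ hi)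
  rw [mem_range]
  omega

lemma invNum_eq_sum_invEnd :
    invNum σ = ∑ j ∈ Icc 1 m, invEnd σ j := by
  simp only [invNum, invEnd, card_filter, sum_product_right]

lemma invEnd_lt_invEnd_add_one {i : ℕ} (hi : i ∈ DesSet σ) :
    invEnd σ i < invEnd σ (i + 1) := by
  rw [mem_DesSet_iff] at hi
  obtain ⟨h1, h2, h3⟩ := hi
  rw [oneline_pos_iff] at h2
  have hsub : insert i {j ∈ Icc 1 m | j < i ∧ oneline σ i < oneline σ j} ⊆
      {j ∈ Icc 1 m | j < i + 1 ∧ oneline σ (i + 1) < oneline σ j} := by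
    intro x hx
    simp only [mem_insert, mem_filter, mem_Icc] at hx ⊢
    rcases hx with rfl | ⟨hx, hxi, hlt⟩ <;> omega
  calc invEnd σ i < #(insert i {j ∈ Icc 1 m | j < i ∧ oneline σ i < oneline σ j}) := by
        rw [invEnd, card_insert_of_notMem (by simp)]; omega
    _ ≤ invEnd σ (i + 1) := card_le_card hsub

lemma sum_le_invNum {S : Finset ℕ} (hS : S ⊆ DesSet σ) :
    ∑ i ∈ S, (1 + invEnd σ i) ≤ invNum σ :=
  calc ∑ i ∈ S, (1 + invEnd σ i)
      ≤ ∑ i ∈ S, invEnd σ (i + 1) :=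
        sum_le_sum fun i hi => by have := invEnd_lt_invEnd_add_one σ (hS hi); omega
    _ = ∑ j ∈ S.map (addRightEmbedding 1), invEnd σ j := by rw [sum_map]; rfl
    _ ≤ ∑ j ∈ Icc 1 m, invEnd σ j := by
        refine sum_le_sum_of_subset fun j hj => ?_
        obtain ⟨i, hi, rfl⟩ := mem_map.mp hj
        have := mem_Icc.mp (filter_subset _ _ (hS hi))
        simp only [addRightEmbedding_apply, mem_Icc]
        omega
    _ = invNum σ := (invNum_eq_sum_invEnd σ).symm

end Permutations

lemma card_filter_lt_sdiff_add {N p : ℕ} {S : Finset ℕ} (hS : S ⊆ range N) :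
    #{r ∈ range N \ S | p < r} + #{i ∈ S | p < i} = N - 1 - p := by
  have e1 : {r ∈ range N \ S | p < r} = {r ∈ range N | p < r} \ S := by
    ext; simp only [mem_filter, mem_sdiff]; tauto
  have e2 : {i ∈ S | p < i} = {r ∈ range N | p < r} ∩ S := by
    ext i; simp only [mem_filter, mem_inter]
    exact ⟨fun h => ⟨⟨hS h.1, h.2⟩, h.1⟩, fun h => ⟨h.2, h.1.2⟩⟩
  have e3 : {r ∈ range N | p < r} = Ioo p N := by ext; simp; omega
  rw [e1, e2, card_sdiff_add_card_inter, e3, Nat.card_Ioo]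
  omega

lemma sum_powersetCard_succ_eq_erase {α M : Type*} [DecidableEq α] [AddCommMonoid M] (D : Finset α)
    (a : α) (k : ℕ) (f : Finset α → M) :
    ∑ t ∈ powersetCard (k + 1) D, f t =
      ∑ t ∈ powersetCard (k + 1) (D.erase a), f t +
        if a ∈ D then ∑ t ∈ powersetCard k (D.erase a), f (insert a t) else 0 := by
  split_ifs with ha
  · conv_lhs => rw [← insert_erase ha]
    rw [powersetCard_succ_insert (notMem_erase a D), sum_union, sum_image]
    · intro s hs t ht h
      have has : a ∉ s := notMem_mono (mem_powersetCard.1 hs).1 (notMem_erase a D)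
      have hat : a ∉ t := notMem_mono (mem_powersetCard.1 ht).1 (notMem_erase a D)
      rw [← erase_insert has, ← erase_insert hat, h]
    · refine disjoint_left.2 fun t ht ht' => ?_
      obtain ⟨u, -, rfl⟩ := mem_image.1 ht'
      exact notMem_erase a D ((mem_powersetCard.1 ht).1 (mem_insert_self a u))
  · rw [erase_eq_of_notMem ha, add_zero]

section QCount

variable {R : Type*} [CommRing R] (q : R)

lemma sum_pow_card_filter_lt (V : Finset ℕ) :
    ∑ x ∈ V, q ^ #{y ∈ V | x < y} = qnum q #V := by
  induction V using Finset.induction_on_max with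
  | empty => simp [qnum]
  | insert a s ha ih =>
    have hnot : a ∉ s := fun h => lt_irrefl a (ha a h)
    have h0 : {y ∈ insert a s | a < y} = ∅ := by
      refine filter_eq_empty_iff.2 fun y hy => ?_
      rcases mem_insert.1 hy with rfl | hy
      · exact lt_irrefl y
      · exact (ha y hy).not_gt
    have h1 : ∀ x ∈ s, #{y ∈ insert a s | x < y} = #{y ∈ s | x < y} + 1 := fun x hx => by
      rw [filter_insert, if_pos (ha x hx), card_insert_of_notMem (by simp [hnot])]
    rw [sum_insert hnot, card_insert_of_notMem hnot, qnum, geom_sum_succ, ← qnum, ← ih, mul_sum,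
      h0, card_empty, pow_zero, add_comm, sum_congr rfl fun x hx => by rw [h1 x hx, pow_succ']]

lemma sum_range_sum_powersetCard_erase {N k : ℕ} {D : Finset ℕ} (hD : D ⊆ range N)
    (w : Finset ℕ → R) :
    ∑ p ∈ range N, ∑ S ∈ powersetCard k (D.erase p), w S * q ^ #{r ∈ range N \ S | p < r} =
      qnum q (N - k) * ∑ S ∈ powersetCard k D, w S := by
  rw [sum_comm' (t' := powersetCard k D) (s' := fun S => range N \ S), mul_sum]
  · refine sum_congr rfl fun S hS => ?_
    obtain ⟨hSD, hSk⟩ := mem_powersetCard.1 hS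
    rw [← mul_sum, sum_pow_card_filter_lt, card_sdiff_of_subset (hSD.trans hD), card_range, hSk,
      mul_comm]
  · intro p S
    simp only [mem_range, mem_powersetCard, subset_erase, mem_sdiff]
    tauto

end QCount

section Insertion

variable {n : ℕ} (p : Fin (n + 1)) (π : Equiv.Perm (Fin n))

/-- `insertMax p π` has one-line notation `π₁ ⋯ π_p (n+1) π_{p+1} ⋯ π_n`. -/
def insertMax : Equiv.Perm (Fin (n + 1)) :=
  (finSuccEquiv' p).trans ((Equiv.optionCongr π).trans (finSuccEquiv' (Fin.last n)).symm)

lemma insertMax_self : insertMax p π p = Fin.last n := by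
  simp [insertMax]

lemma insertMax_succAbove (j : Fin n) :
    insertMax p π (p.succAbove j) = (π j).castSucc := by
  simp [insertMax]

lemma insertMax_injective :
    Function.Injective fun x : Fin (n + 1) × Equiv.Perm (Fin n) => insertMax x.1 x.2 := by
  rintro ⟨p, π⟩ ⟨p', π'⟩ h
  dsimp only at h
  obtain rfl : p = p' := (insertMax p' π').injective <| by
    rw [insertMax_self, ← h, insertMax_self]
  refine Prod.ext rfl (Equiv.ext fun j => Fin.castSucc_injective n ?_)
  rw [← insertMax_succAbove, ← insertMax_succAbove, h]

lemma insertMax_bijective :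
    Function.Bijective fun x : Fin (n + 1) × Equiv.Perm (Fin n) => insertMax x.1 x.2 := by
  rw [Fintype.bijective_iff_injective_and_card]
  refine ⟨insertMax_injective, ?_⟩
  simp [Fintype.card_perm, Nat.factorial_succ]

lemma skip_val_add_one (j : Fin n) : skip (p + 1) (j + 1) = p.succAbove j + 1 := by
  rw [skip_apply, Fin.succAbove]
  split_ifs <;> simp only [Fin.lt_def, Fin.val_castSucc, Fin.val_succ] at * <;> omega

lemma skip_add_one {i : ℕ} (hi : i ≠ p) : skip (p + 1) (i + 1) = skip (p + 1) i + 1 := by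
  simp only [skip_apply]
  split_ifs <;> omega

lemma oneline_insertMax_skip (i : ℕ) : oneline (insertMax p π) (skip (p + 1) i) = oneline π i := by
  by_cases h : 1 ≤ i ∧ i ≤ n
  · obtain ⟨j, rfl⟩ : ∃ j : Fin n, (j : ℕ) + 1 = i := ⟨⟨i - 1, by omega⟩, by simp; omega⟩
    rw [skip_val_add_one, oneline_val_add_one, insertMax_succAbove, oneline_val_add_one,
      Fin.val_castSucc]
  · have hπ : ¬ 0 < oneline π i := by rwa [oneline_pos_iff]
    have hσ : ¬ 0 < oneline (insertMax p π) (skip (p + 1) i) := by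
      rw [oneline_pos_iff, skip_apply]
      split_ifs <;> omega
    omega

lemma oneline_insertMax_self : oneline (insertMax p π) (p + 1) = n + 1 := by
  rw [oneline_val_add_one, insertMax_self, Fin.val_last]

lemma skip_mem_DesSet_insertMax {i : ℕ} (hi : i ≠ p) :
    skip (p + 1) i ∈ DesSet (insertMax p π) ↔ i ∈ DesSet π := by
  rw [mem_DesSet_iff, mem_DesSet_iff, ← skip_add_one p hi, oneline_insertMax_skip,
    oneline_insertMax_skip]
  have : 1 ≤ skip (p + 1) i ↔ 1 ≤ i := by rw [skip_apply]; split_ifs <;> omega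
  rw [this]

lemma val_notMem_DesSet_insertMax : (p : ℕ) ∉ DesSet (insertMax p π) := by
  rw [mem_DesSet_iff, oneline_insertMax_self]
  have := oneline_le (insertMax p π) p
  omega

lemma add_one_mem_DesSet_insertMax_iff : (p : ℕ) + 1 ∈ DesSet (insertMax p π) ↔ (p : ℕ) < n := by
  have h : skip (p + 1) (p + 1) = p + 1 + 1 := by rw [skip_apply, if_neg (by omega)]
  rw [mem_DesSet_iff, oneline_insertMax_self, ← h, oneline_insertMax_skip, oneline_pos_iff]
  have := oneline_le π (p + 1)
  omega

lemma DesSet_insertMax_erase :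
    (DesSet (insertMax p π)).erase (p + 1) =
      ((DesSet π).erase p).map (skip (p + 1)).toEmbedding := by
  ext j
  simp only [mem_erase, mem_map, RelEmbedding.coe_toEmbedding]
  constructor
  · rintro ⟨hjP, hj⟩
    obtain ⟨i, rfl⟩ := exists_skip_eq hjP
    have hip : i ≠ p := by
      rintro rfl
      rw [skip_apply, if_pos (by omega)] at hj
      exact val_notMem_DesSet_insertMax p π hj
    exact ⟨i, ⟨hip, (skip_mem_DesSet_insertMax p π hip).1 hj⟩, rfl⟩
  · rintro ⟨i, ⟨hip, hi⟩, rfl⟩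
    exact ⟨skip_ne _ _, (skip_mem_DesSet_insertMax p π hip).2 hi⟩

lemma invEnd_insertMax_skip (j : ℕ) :
    invEnd (insertMax p π) (skip (p + 1) j) = invEnd π j + if (p : ℕ) < j then 1 else 0 := by
  unfold invEnd
  rw [Icc_eq_insert_map_skip (P := p + 1) (by omega) (by omega), filter_insert, filter_map]
  simp only [Function.comp_def, RelEmbedding.coe_toEmbedding, (skip _).lt_iff_lt,
    oneline_insertMax_skip, oneline_insertMax_self]
  have hP : (p : ℕ) + 1 < skip (p + 1) j ∧ oneline π j < n + 1 ↔ (p : ℕ) < j := by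
    have := oneline_le π j
    rw [skip_apply]; split_ifs <;> omega
  simp only [hP]
  split_ifs
  · rw [card_insert_of_notMem (by simp [skip_ne]), card_map]
  · rw [card_map, add_zero]

lemma invEnd_insertMax_self : invEnd (insertMax p π) (p + 1) = 0 := by
  rw [invEnd, card_eq_zero, filter_eq_empty_iff]
  rintro i - ⟨-, h⟩
  rw [oneline_insertMax_self] at h
  have := oneline_le (insertMax p π) i
  omega

lemma invNum_insertMax : invNum (insertMax p π) = invNum π + (n - p) := by
  rw [invNum_eq_sum_invEnd, Icc_eq_insert_map_skip (P := p + 1) (by omega) (by omega),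
    sum_insert (by simp [skip_ne]), sum_map, invEnd_insertMax_self, zero_add]
  simp only [RelEmbedding.coe_toEmbedding, invEnd_insertMax_skip, sum_add_distrib,
    ← invNum_eq_sum_invEnd, sum_boole, Nat.cast_id]
  have : {j ∈ Icc 1 n | (p : ℕ) < j} = Ioc (p : ℕ) n := by ext; simp; omega
  rw [this, Nat.card_Ioc]

lemma starInv_insertMax_map {S : Finset ℕ} (hS : S ⊆ DesSet π) :
    starInv (insertMax p π) (S.map (skip (p + 1)).toEmbedding) =
      starInv π S + #{r ∈ range (n + 1) \ S | (p : ℕ) < r} := by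
  have hsum : ∑ i ∈ S.map (skip (p + 1)).toEmbedding, (1 + invEnd (insertMax p π) i) =
      ∑ i ∈ S, (1 + invEnd π i) + #{i ∈ S | (p : ℕ) < i} := by
    simp only [sum_map, RelEmbedding.coe_toEmbedding, invEnd_insertMax_skip, card_filter,
      ← sum_add_distrib, add_assoc]
  have hcount := card_filter_lt_sdiff_add (N := n + 1) (p := p)
    (hS.trans (DesSet_subset_range π (Nat.le_add_right n 1)))
  -- `hle` rules out truncation in the subtraction defining `starInv π S`.
  have hle := sum_le_invNum π hS
  have hinv := invNum_insertMax p π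
  have hp := p.isLt
  unfold starInv
  omega

lemma starInv_insertMax_insert_map (hp : (p : ℕ) < n) {S : Finset ℕ} (hS : S ⊆ DesSet π) :
    starInv (insertMax p π) (insert ((p : ℕ) + 1) (S.map (skip (p + 1)).toEmbedding)) =
      starInv π S + #{r ∈ range n \ S | (p : ℕ) < r} := by
  have h := starInv_insertMax_map p π hS
  have hcount := card_filter_lt_sdiff_add (N := n + 1) (p := p)
    (hS.trans (DesSet_subset_range π (Nat.le_add_right n 1)))
  have hcount' := card_filter_lt_sdiff_add (p := p) (hS.trans (DesSet_subset_range π le_rfl))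
  unfold starInv at h ⊢
  rw [sum_insert (by simp [skip_ne]), invEnd_insertMax_self]
  omega

end Insertion

section StarSums

variable {R : Type*} [CommRing R] (q : R)

def descentStarSum {m : ℕ} (σ : Equiv.Perm (Fin m)) (k : ℕ) : R :=
  ∑ S ∈ powersetCard k (DesSet σ), q ^ starInv σ S

lemma Dinv_eq_sum_descentStarSum (m k : ℕ) :
    Dinv q m k = ∑ σ : Equiv.Perm (Fin m), descentStarSum q σ k := by
  simp only [Dinv, descentStarSum, starSets, powersetCard_eq_filter]

variable {n : ℕ} (p : Fin (n + 1)) (π : Equiv.Perm (Fin n))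

lemma sum_powersetCard_DesSet_insertMax_erase (k : ℕ) :
    ∑ S ∈ powersetCard k ((DesSet (insertMax p π)).erase (p + 1)), q ^ starInv (insertMax p π) S =
      ∑ S ∈ powersetCard k ((DesSet π).erase p),
        q ^ starInv π S * q ^ #{r ∈ range (n + 1) \ S | (p : ℕ) < r} := by
  rw [DesSet_insertMax_erase, powersetCard_map, sum_map]
  refine sum_congr rfl fun S hS => ?_
  rw [RelEmbedding.coe_toEmbedding, mapEmbedding_apply,
    starInv_insertMax_map p π ((mem_powersetCard.1 hS).1.trans (erase_subset _ _)), pow_add]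

lemma sum_powersetCard_DesSet_insertMax_erase_insert (hp : (p : ℕ) < n) (k : ℕ) :
    ∑ S ∈ powersetCard k ((DesSet (insertMax p π)).erase (p + 1)),
        q ^ starInv (insertMax p π) (insert ((p : ℕ) + 1) S) =
      ∑ S ∈ powersetCard k ((DesSet π).erase p),
        q ^ starInv π S * q ^ #{r ∈ range n \ S | (p : ℕ) < r} := by
  rw [DesSet_insertMax_erase, powersetCard_map, sum_map]
  refine sum_congr rfl fun S hS => ?_
  rw [RelEmbedding.coe_toEmbedding, mapEmbedding_apply,
    starInv_insertMax_insert_map p π hp ((mem_powersetCard.1 hS).1.trans (erase_subset _ _)),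
    pow_add]

lemma sum_descentStarSum_insertMax_zero :
    ∑ p : Fin (n + 1), descentStarSum q (insertMax p π) 0 =
      qnum q (n + 1) * descentStarSum q π 0 := by
  let U : ℕ → R := fun p => ∑ S ∈ powersetCard 0 ((DesSet π).erase p),
    q ^ starInv π S * q ^ #{r ∈ range (n + 1) \ S | p < r}
  have h (p : Fin (n + 1)) : descentStarSum q (insertMax p π) 0 = U p := by
    rw [descentStarSum, powersetCard_zero,
      ← powersetCard_zero ((DesSet (insertMax p π)).erase (p + 1)),
      sum_powersetCard_DesSet_insertMax_erase]
  rw [sum_congr rfl fun p _ => h p, Fin.sum_univ_eq_sum_range U,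
    sum_range_sum_powersetCard_erase q (DesSet_subset_range π (Nat.le_add_right n 1))]
  rfl

lemma sum_descentStarSum_insertMax_succ (k : ℕ) :
    ∑ p : Fin (n + 1), descentStarSum q (insertMax p π) (k + 1) =
      qnum q (n - k) * (descentStarSum q π (k + 1) + descentStarSum q π k) := by
  let U : ℕ → R := fun p => ∑ S ∈ powersetCard (k + 1) ((DesSet π).erase p),
    q ^ starInv π S * q ^ #{r ∈ range (n + 1) \ S | p < r}
  let V : ℕ → R := fun p => ∑ S ∈ powersetCard k ((DesSet π).erase p),
    q ^ starInv π S * q ^ #{r ∈ range n \ S | p < r}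
  have h (p : Fin (n + 1)) :
      descentStarSum q (insertMax p π) (k + 1) = U p + if (p : ℕ) < n then V p else 0 := by
    rw [descentStarSum, sum_powersetCard_succ_eq_erase _ ((p : ℕ) + 1),
      sum_powersetCard_DesSet_insertMax_erase]
    by_cases hp : (p : ℕ) < n
    · rw [if_pos ((add_one_mem_DesSet_insertMax_iff p π).2 hp), if_pos hp,
        sum_powersetCard_DesSet_insertMax_erase_insert q p π hp]
    · rw [if_neg (mt (add_one_mem_DesSet_insertMax_iff p π).1 hp), if_neg hp]
  have hV : ∑ p ∈ range (n + 1), (if p < n then V p else 0) = ∑ p ∈ range n, V p := by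
    rw [sum_range_succ, if_neg (lt_irrefl n), add_zero]
    exact sum_congr rfl fun p hp => if_pos (mem_range.1 hp)
  rw [sum_congr rfl fun p _ => h p, sum_add_distrib, Fin.sum_univ_eq_sum_range U,
    Fin.sum_univ_eq_sum_range (fun p => if p < n then V p else 0), hV,
    sum_range_sum_powersetCard_erase q (DesSet_subset_range π (Nat.le_add_right n 1)),
    sum_range_sum_powersetCard_erase q (DesSet_subset_range π le_rfl), Nat.add_sub_add_right,
    mul_add]
  rfl

end StarSums

section Recurrence

variable {R : Type*} [CommRing R] (q : R)

lemma Dinv_succ_eq_sum_insertMax (n k : ℕ) :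
    Dinv q (n + 1) k = ∑ π : Equiv.Perm (Fin n), ∑ p, descentStarSum q (insertMax p π) k := by
  rw [Dinv_eq_sum_descentStarSum, ← Fintype.sum_bijective _ insertMax_bijective
    (fun x => descentStarSum q (insertMax x.1 x.2) k) _ fun _ => rfl, Fintype.sum_prod_type,
    sum_comm]

lemma Dinv_succ_zero (n : ℕ) : Dinv q (n + 1) 0 = qnum q (n + 1) * Dinv q n 0 := by
  rw [Dinv_succ_eq_sum_insertMax, Dinv_eq_sum_descentStarSum, mul_sum]
  exact sum_congr rfl fun π _ => sum_descentStarSum_insertMax_zero q π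

lemma Dinv_succ_succ (n k : ℕ) :
    Dinv q (n + 1) (k + 1) = qnum q (n - k) * (Dinv q n (k + 1) + Dinv q n k) := by
  rw [Dinv_succ_eq_sum_insertMax, Dinv_eq_sum_descentStarSum, Dinv_eq_sum_descentStarSum,
    ← sum_add_distrib, mul_sum]
  exact sum_congr rfl fun π _ => sum_descentStarSum_insertMax_succ q π k

lemma Dinv_zero_zero : Dinv q 0 0 = 1 := by
  simp [Dinv, starSets, DesSet, starInv, invNum, filter_singleton]

lemma Dinv_succ_self_right (m : ℕ) : Dinv q (m + 1) m = 1 := by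
  induction m with
  | zero => simp [Dinv_succ_zero, Dinv_zero_zero, qnum]
  | succ m ih =>
    -- `Dinv q (m + 1) (m + 1)` vanishes: its own recurrence carries the factor `qnum q 0 = 0`.
    rw [Dinv_succ_succ, ih, Dinv_succ_succ q m m]
    simp [qnum]

end Recurrence

/-- D^{inv}_{n,n−1}(q) = 1 for n ≥ 1, and for all n ≥ 2 and 0 ≤ k ≤ n−2,
D^{inv}_{n,k}(q) = [n−k]_q · D^{inv}_{n−1,k}(q) + [n−k]_q · D^{inv}_{n−1,k−1}(q),
with the convention D^{inv}_{n,−1}(q) = 0. -/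
theorem statement6 {R : Type*} [CommRing R] (q : R) :
    (∀ n : ℕ, 1 ≤ n → Dinv q n (n - 1) = 1) ∧
    (∀ n k : ℕ, 2 ≤ n → k ≤ n - 2 →
      Dinv q n k =
        qnum q (n - k) * Dinv q (n - 1) k +
          qnum q (n - k) * (if k = 0 then 0 else Dinv q (n - 1) (k - 1))) := by
  refine ⟨fun n hn => ?_, fun n k hn _ => ?_⟩
  · obtain ⟨m, rfl⟩ := Nat.exists_eq_add_of_le' hn
    exact Dinv_succ_self_right q m
  · obtain ⟨m, rfl⟩ := Nat.exists_eq_add_of_le' (by omega : 1 ≤ n)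
    rcases k with _ | k
    · simp [Dinv_succ_zero]
    · simp [Dinv_succ_succ, mul_add]
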